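/- Let n ≥ 1 and k ≥ 2, and let G be a directed graph with vertex set Bool^n and edge relation E ⊆ Bool^n × Bool^n. Define φ ⊆ Bool^n × Bool^n × Bool^{n(k−1)} by: φ(x, y, (z¹, …, z^{k−1})) holds (where each zⁱ ∈ Bool^n) iff x = y, or (x, y) ∈ E, or there exists 1 ≤ i ≤ k−1 with (x, z¹) ∈ E, (z¹, z²) ∈ E, …, (z^{i−1}, zⁱ) ∈ E, and (zⁱ, y) ∈ E. Then the radius of G is at most k if and only if the workflow authorization policy W_φ is one-shot resilient for budget n. -/

import Mathlib

/-- A workflow authorization policy `W = (S, ≼, U, A, C)`: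
steps `S`, an ordering relation `ord` (the partial order `≼`), users `U`,
a step authorization relation `A ⊆ S × U`, and a set `C` of constraints.
A constraint is a pair `(T, Θ)` where `T ⊆ S` and `Θ` is a set of functions
from `T` to `U` (represented as `σ → Option υ` with domain exactly `T`). -/
structure WAP (σ υ : Type) where
  S : Finset σ
  ord : σ → σ → Prop
  U : Finset υ
  A : Set (σ × υ)
  C : Set (Finset σ × Set (σ → Option υ))

namespace WAP

variable {σ υ : Type} [DecidableEq σ] [DecidableEq υ]

/-- Well-formedness: `ord` is a partial order on `S`, `A ⊆ S × U`, and every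
constraint `(T, Θ)` has `T ⊆ S` and `Θ` a set of functions from `T` to `U`. -/
def WellFormed (W : WAP σ υ) : Prop :=
  (∀ s ∈ W.S, W.ord s s) ∧
  (∀ s₁ ∈ W.S, ∀ s₂ ∈ W.S, W.ord s₁ s₂ → W.ord s₂ s₁ → s₁ = s₂) ∧
  (∀ s₁ ∈ W.S, ∀ s₂ ∈ W.S, ∀ s₃ ∈ W.S, W.ord s₁ s₂ → W.ord s₂ s₃ → W.ord s₁ s₃) ∧
  (∀ p ∈ W.A, p.1 ∈ W.S ∧ p.2 ∈ W.U) ∧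
  (∀ c ∈ W.C, c.1 ⊆ W.S ∧
    ∀ θ ∈ c.2, (∀ s, θ s ≠ none ↔ s ∈ c.1) ∧ ∀ s u, θ s = some u → u ∈ W.U)

/-- A partial plan: a partial function from `S` to `U` whose domain is
causally closed (if `s₁` is assigned and `s₂ ≺ s₁` then `s₂` is assigned). -/
def IsPartialPlan (W : WAP σ υ) (θ : σ → Option υ) : Prop :=
  (∀ s u, θ s = some u → s ∈ W.S ∧ u ∈ W.U) ∧
  ∀ s₁ s₂, s₁ ∈ W.S → s₂ ∈ W.S → θ s₁ ≠ none → W.ord s₂ s₁ → s₂ ≠ s₁ → θ s₂ ≠ none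

/-- Restriction of a partial plan to a set `T` of steps. -/
def restrictTo (θ : σ → Option υ) (T : Finset σ) : σ → Option υ :=
  fun s => if s ∈ T then θ s else none

/-- Validity of a (partial) plan: every assignment is authorized, and every
constraint whose step set is contained in the domain is satisfied. -/
def Valid (W : WAP σ υ) (θ : σ → Option υ) : Prop :=
  (∀ s u, θ s = some u → (s, u) ∈ W.A) ∧
  ∀ c ∈ W.C, (∀ s ∈ c.1, θ s ≠ none) → restrictTo θ c.1 ∈ c.2

/-- A plan: a partial plan whose domain is all of `S`. -/
def IsPlan (W : WAP σ υ) (θ : σ → Option υ) : Prop :=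
  W.IsPartialPlan θ ∧ ∀ s ∈ W.S, θ s ≠ none

def IsValidPlan (W : WAP σ υ) (θ : σ → Option υ) : Prop :=
  W.IsPlan θ ∧ W.Valid θ

/-- `θ` assigns no user from `Δ`. -/
def Avoids (θ : σ → Option υ) (Δ : Finset υ) : Prop :=
  ∀ s u, θ s = some u → u ∉ Δ

/-- Static resiliency for budget `t`. -/
def StaticallyResilient (W : WAP σ υ) (t : ℕ) : Prop :=
  ∀ Δ : Finset υ, Δ ⊆ W.U → Δ.card ≤ t → ∃ θ, W.IsValidPlan θ ∧ Avoids θ Δ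

/-- A move of Player 1: assign a user `u ∈ U ∖ Δ` to a not-yet-assigned step,
so that the result remains a causally closed partial plan and remains valid
(if the extension were invalid, Player 2 would win at once). -/
def P1Move (W : WAP σ υ) (Δ : Finset υ) (θ θ' : σ → Option υ) : Prop :=
  ∃ s u, s ∈ W.S ∧ θ s = none ∧ u ∈ W.U ∧ u ∉ Δ ∧
    θ' = Function.update θ s (some u) ∧
    W.IsPartialPlan θ' ∧ W.Valid θ'

/-- A move of Player 2 in the one-shot resiliency game: either pass, or
(if it has not yet struck) strike, adding at most `t` users of `U` to `Δ`. -/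
def OneShotP2Move (W : WAP σ υ) (t : ℕ) (Δ : Finset υ) (struck : Bool)
    (Δ' : Finset υ) (struck' : Bool) : Prop :=
  (Δ' = Δ ∧ struck' = struck) ∨
  (struck = false ∧ struck' = true ∧ Δ ⊆ Δ' ∧ Δ' ⊆ W.U ∧ (Δ' \ Δ).card ≤ t)

/-- Player 1 can force a win of the one-shot resiliency game within `n`
more rounds, from the given configuration (`struck` records whether
Player 2 has already struck).  Player 1 has won once the (valid) partial
plan has been extended to a valid plan on all of `S`; otherwise, for every
move of Player 2 there must be a move of Player 1 from which Player 1 can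
still force a win.  Since each round assigns one more step, the game from
the initial configuration lasts at most `|S|` rounds. -/
def OneShotWins (W : WAP σ υ) (t : ℕ) :
    ℕ → Finset υ → (σ → Option υ) → Bool → Prop
  | 0, _, θ, _ => (∀ s ∈ W.S, θ s ≠ none) ∧ W.IsPartialPlan θ ∧ W.Valid θ
  | n + 1, Δ, θ, struck =>
      ((∀ s ∈ W.S, θ s ≠ none) ∧ W.IsPartialPlan θ ∧ W.Valid θ) ∨
      ((∃ s ∈ W.S, θ s = none) ∧
        ∀ Δ' struck', OneShotP2Move W t Δ struck Δ' struck' →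
          ∃ θ', P1Move W Δ' θ θ' ∧ OneShotWins W t n Δ' θ' struck')

/-- One-shot resiliency for budget `t`: Player 1 wins the one-shot
resiliency game (from the initial configuration `(∅, ∅)`) no matter how
Player 2 plays. -/
def OneShotResilient (W : WAP σ υ) (t : ℕ) : Prop :=
  OneShotWins W t W.S.card ∅ (fun _ => none) false

/-- A move of Player 2 in the decremental resiliency game: add zero or more
users of `U` to `Δ`, subject to `|Δ| ≤ t` throughout. -/
def DecP2Move (W : WAP σ υ) (t : ℕ) (Δ Δ' : Finset υ) : Prop :=
  Δ ⊆ Δ' ∧ Δ' ⊆ W.U ∧ Δ'.card ≤ t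

/-- Player 1 can force a win of the decremental resiliency game within `n`
more rounds. -/
def DecWins (W : WAP σ υ) (t : ℕ) : ℕ → Finset υ → (σ → Option υ) → Prop
  | 0, _, θ => (∀ s ∈ W.S, θ s ≠ none) ∧ W.IsPartialPlan θ ∧ W.Valid θ
  | n + 1, Δ, θ =>
      ((∀ s ∈ W.S, θ s ≠ none) ∧ W.IsPartialPlan θ ∧ W.Valid θ) ∨
      ((∃ s ∈ W.S, θ s = none) ∧
        ∀ Δ', DecP2Move W t Δ Δ' →
          ∃ θ', P1Move W Δ' θ θ' ∧ DecWins W t n Δ' θ')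

/-- Decremental resiliency for budget `t`: Player 1 wins the decremental
resiliency game no matter how Player 2 plays. -/
def DecrementallyResilient (W : WAP σ υ) (t : ℕ) : Prop :=
  DecWins W t W.S.card ∅ (fun _ => none)

end WAP
section PhiConstruction

open WAP

/-- A step of `W_φ`: `Sum.inl i` is `x_{i+1}`, `Sum.inr (Sum.inl i)` is
`y_{i+1}`, and `Sum.inr (Sum.inr l)` is `z_{l+1}` (0-indexed). -/
abbrev StepPhi (n m : ℕ) := Sum (Fin n) (Sum (Fin n) (Fin m))

/-- A user of `W_φ`: `Sum.inl (b, i)` is a `⊤/⊥`-variant user (`⊤` iff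
`b = true`) with index `i`, and `Sum.inr (b, j)` is a `t/f`-variant user
(`t` iff `b = true`) with index `j`. -/
abbrev UserPhi := Sum (Bool × ℕ) (Bool × ℕ)

/-- The rank of a step in the linear order `x₁ ≺ ⋯ ≺ x_n ≺ y₁ ≺ ⋯ ≺ y_n ≺
z₁ ≺ ⋯ ≺ z_m`. -/
def rankPhi {n m : ℕ} : StepPhi n m → ℕ
  | Sum.inl i => i.1
  | Sum.inr (Sum.inl i) => n + i.1
  | Sum.inr (Sum.inr l) => n + n + l.1

/-- `U_bool = {(⊥,i), (⊤,i) : 1 ≤ i ≤ n+1}`. -/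
def UboolFin (n : ℕ) : Finset UserPhi :=
  ((({false, true} : Finset Bool)) ×ˢ Finset.Icc 1 (n + 1)).image Sum.inl

/-- `U_star = {(f,1),(t,2),(f,3),(t,4),…,(f,2n−1),(t,2n)}`: the user with
index `j` represents `t` exactly when `j` is even. -/
def UstarFin (n : ℕ) : Finset UserPhi :=
  (Finset.Icc 1 (2 * n)).image (fun j => Sum.inr (decide (j % 2 = 0), j))

/-- The truth value represented by `θ` at an `x`-step (true iff a `⊤`-user). -/
def xVal {n m : ℕ} (θ : StepPhi n m → Option UserPhi) (i : Fin n) : Bool :=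
  match θ (Sum.inl i) with
  | some (Sum.inl (b, _)) => b
  | _ => false

/-- The truth value represented by `θ` at a `y`-step (true iff a `t`-user). -/
def yVal {n m : ℕ} (θ : StepPhi n m → Option UserPhi) (i : Fin n) : Bool :=
  match θ (Sum.inr (Sum.inl i)) with
  | some (Sum.inr (b, _)) => b
  | _ => false

/-- The truth value represented by `θ` at a `z`-step (true iff a `⊤`-user). -/
def zVal {n m : ℕ} (θ : StepPhi n m → Option UserPhi) (l : Fin m) : Bool :=
  match θ (Sum.inr (Sum.inr l)) with
  | some (Sum.inl (b, _)) => b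
  | _ => false

/-- The workflow authorization policy `W_φ` (the combinatorial core of the
paper's Σ₃ᵖ-hardness reduction): steps `x₁ ≺ ⋯ ≺ x_n ≺ y₁ ≺ ⋯ ≺ y_n ≺ z₁ ≺ ⋯
≺ z_m`; users `U_bool ∪ U_star`; `x`- and `z`-steps may be assigned any
`U_bool` user and `y`-steps any `U_star` user; constraints: the ordering
constraints on consecutive `y`-steps (indices in `U_star` strictly
increasing) plus the global constraint `(S, Θ_φ)`. -/
def WPhi (n m : ℕ)
    (φ : (Fin n → Bool) → (Fin n → Bool) → (Fin m → Bool) → Prop) :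
    WAP (StepPhi n m) UserPhi :=
  { S := Finset.univ
    ord := fun a b => rankPhi a ≤ rankPhi b
    U := UboolFin n ∪ UstarFin n
    A := {p | match p.1 with
              | Sum.inr (Sum.inl _) => p.2 ∈ UstarFin n
              | _ => p.2 ∈ UboolFin n}
    C := {c | ∃ (i : Fin n) (h : i.1 + 1 < n),
            c = (({Sum.inr (Sum.inl i), Sum.inr (Sum.inl ⟨i.1 + 1, h⟩)} :
                    Finset (StepPhi n m)),
                 {θ | (∀ x, θ x ≠ none ↔
                        x ∈ ({Sum.inr (Sum.inl i),
                              Sum.inr (Sum.inl ⟨i.1 + 1, h⟩)} :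
                               Finset (StepPhi n m))) ∧
                      (∀ x v, θ x = some v → v ∈ UboolFin n ∪ UstarFin n) ∧
                      ∃ b₁ j₁ b₂ j₂,
                        θ (Sum.inr (Sum.inl i)) = some (Sum.inr (b₁, j₁)) ∧
                        θ (Sum.inr (Sum.inl ⟨i.1 + 1, h⟩)) =
                          some (Sum.inr (b₂, j₂)) ∧
                        j₁ < j₂})} ∪
        {((Finset.univ : Finset (StepPhi n m)),
          {θ | (∀ x, θ x ≠ none) ∧
               (∀ x v, θ x = some v → v ∈ UboolFin n ∪ UstarFin n) ∧
               φ (xVal θ) (yVal θ) (zVal θ)})} }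

end PhiConstruction
section Paths

/-- `y` is reachable from `x` by a directed path (pairwise distinct
vertices) of length at most `k` (every vertex is reachable from itself by a
path of length `0`). -/
def PathAtMost {V : Type} (E : V → V → Prop) (k : ℕ) (x y : V) : Prop :=
  ∃ l ≤ k, ∃ f : Fin (l + 1) → V, Function.Injective f ∧
    f 0 = x ∧ f (Fin.last l) = y ∧
    ∀ i : Fin l, E (f i.castSucc) (f i.succ)

/-- The radius of the directed graph `(V, E)` is at most `k`: some vertex
reaches every vertex by a directed path of length at most `k`. -/
def RadiusAtMost {V : Type} (E : V → V → Prop) (k : ℕ) : Prop :=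
  ∃ u : V, ∀ v : V, PathAtMost E k u v

end Paths
section Radius

/-- The `i`-th block `zⁱ⁺¹ ∈ Bool^n` of a vector `z ∈ Bool^{n(k−1)}`. -/
def zBlock {n k : ℕ} (z : Fin (n * (k - 1)) → Bool) (i : Fin (k - 1))
    (j : Fin n) : Bool :=
  z ⟨i.1 * n + j.1, by
      have h1 := i.isLt
      have h2 := j.isLt
      calc i.1 * n + j.1 < i.1 * n + n := by omega
        _ = (i.1 + 1) * n := by ring
        _ ≤ (k - 1) * n := Nat.mul_le_mul_right n h1
        _ = n * (k - 1) := Nat.mul_comm _ _⟩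

/-- The predicate `φ` of the Σ₃ᵖ-hardness reduction:
`φ(x, y, (z¹, …, z^{k−1}))` iff `x = y`, or `(x, y) ∈ E`, or there is
`1 ≤ i ≤ k−1` with `(x, z¹) ∈ E`, `(z¹, z²) ∈ E`, …, `(z^{i−1}, zⁱ) ∈ E`,
and `(zⁱ, y) ∈ E`. -/
def phiRad (n k : ℕ) (E : (Fin n → Bool) → (Fin n → Bool) → Prop) :
    (Fin n → Bool) → (Fin n → Bool) → (Fin (n * (k - 1)) → Bool) → Prop :=
  fun x y z => x = y ∨ E x y ∨
    ∃ i, ∃ h1 : 1 ≤ i, ∃ h2 : i ≤ k - 1,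
      E x (zBlock z ⟨0, by omega⟩) ∧
      (∀ j (hj : j + 1 < i),
        E (zBlock z ⟨j, by omega⟩) (zBlock z ⟨j + 1, by omega⟩)) ∧
      E (zBlock z ⟨i - 1, by omega⟩) y

end Radius

/-!
The radius of `G` is at most `k` iff some `x` reaches every `y` by a walk of length at most `k`
(a shortest walk is a path), i.e. iff `∃ x, ∀ y, ∃ z, φ x y z`.

The steps of `W_φ` are linearly ordered, so every move of Player 1 assigns the next step and
only the moment of the strike matters. If `∃ x, ∀ y, ∃ z, φ x y z`, Player 1 plays such an
`x`, the users `(f,1), (t,2), …` on the `y`-steps and the witness `z` for the `y` they encode.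
After a strike of at most `n` users there is still a user of each truth value in `U_bool`, and
enough unused indices of `U_star` to continue the `y`-steps increasingly, so Player 1 completes
a plan with the witness for the new `y`. Conversely, Player 2 waits until the `x`-steps are
assigned and then, for a target `y`, removes from each pair `(f,2i+1), (t,2i+2)` the user
disagreeing with `y i`. The `n` increasing users of the `y`-steps must then be exactly the `n`
survivors, which encode `y`, and the winning plan provides `z`.
-/

open WAP

section Walks

variable {V : Type} (E : V → V → Prop)

/-- Unlike in `PathAtMost`, vertices may repeat; only `f 0, …, f l` matter. -/
def HasWalk (l : ℕ) (x y : V) : Prop :=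
  ∃ f : ℕ → V, f 0 = x ∧ f l = y ∧ ∀ i < l, E (f i) (f (i + 1))

variable {E}

lemma hasWalk_shortcut {l a b : ℕ} {x y : V} {f : ℕ → V} (h0 : f 0 = x) (hl : f l = y)
    (hE : ∀ i < l, E (f i) (f (i + 1))) (hab : a < b) (hbl : b ≤ l) (hf : f a = f b) :
    HasWalk E (l - (b - a)) x y := by
  refine ⟨fun t => if t ≤ a then f t else f (t + (b - a)), by simpa using h0, ?_, ?_⟩
  · by_cases hb : b = l
    · dsimp only
      rw [if_pos (by omega), show l - (b - a) = a by omega, hf, hb, hl]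
    · simp [show ¬ l - (b - a) ≤ a by omega, show l - (b - a) + (b - a) = l by omega, hl]
  · intro t ht
    by_cases h1 : t + 1 ≤ a
    · simpa [h1, show t ≤ a by omega] using hE t (by omega)
    by_cases h2 : t = a
    · subst h2
      simpa [hf, show t + 1 + (b - t) = b + 1 by omega] using hE b (by omega)
    · simpa [show ¬ t ≤ a by omega, h1, show t + 1 + (b - a) = t + (b - a) + 1 by omega]
        using hE (t + (b - a)) (by omega)

lemma pathAtMost_iff_exists_hasWalk {k : ℕ} {x y : V} :
    PathAtMost E k x y ↔ ∃ l ≤ k, HasWalk E l x y := by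
  classical
  constructor
  · rintro ⟨l, hlk, f, -, h0, hl, hE⟩
    refine ⟨l, hlk, fun t => if h : t < l + 1 then f ⟨t, h⟩ else y, by simpa using h0,
      by simpa [Fin.last] using hl,
      fun i hi => by simpa [hi, Nat.lt_succ_of_lt hi] using hE ⟨i, hi⟩⟩
  · rintro ⟨l, hlk, hw⟩
    have hex : ∃ l, HasWalk E l x y := ⟨l, hw⟩
    obtain ⟨f, h0, hl, hE⟩ := Nat.find_spec hex
    -- a shortest walk visits no vertex twice
    have hinj : ∀ a b, a < b → b ≤ Nat.find hex → f a ≠ f b := fun a b hab hb hf =>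
      Nat.find_min hex (by omega) (hasWalk_shortcut h0 hl hE hab hb hf)
    refine ⟨Nat.find hex, (Nat.find_min' hex hw).trans hlk, fun i => f i, fun i j hij => ?_,
      h0, hl, fun i => hE i i.isLt⟩
    by_contra hne
    rcases lt_or_gt_of_ne (Fin.val_ne_of_ne hne) with h | h
    · exact hinj i j h (by omega) hij
    · exact hinj j i h (by omega) hij.symm

end Walks

section RadiusEncoding

variable {n k : ℕ} {E : (Fin n → Bool) → (Fin n → Bool) → Prop}

def zOfBlocks (g : ℕ → Fin n → Bool) : Fin (n * (k - 1)) → Bool :=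
  fun a => g (a / n) ⟨a % n, Nat.mod_lt _ (Nat.pos_of_mul_pos_right a.pos)⟩

lemma zBlock_zOfBlocks (g : ℕ → Fin n → Bool) (i : Fin (k - 1)) :
    zBlock (zOfBlocks (k := k) g) i = g i := by
  funext j
  have hn : 0 < n := j.pos
  have hdiv : (i * n + j) / n = i := by
    rw [Nat.add_comm, Nat.add_mul_div_right _ _ hn, Nat.div_eq_of_lt j.isLt, zero_add]
  simp [zBlock, zOfBlocks, hdiv, Nat.add_mod, Nat.mod_eq_of_lt j.isLt]

lemma hasWalk_of_phiRad (hk : 1 ≤ k) {x y : Fin n → Bool} {z : Fin (n * (k - 1)) → Bool}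
    (h : phiRad n k E x y z) : ∃ l ≤ k, HasWalk E l x y := by
  rcases h with rfl | hxy | ⟨i, hi, hik, hfirst, hmid, hlast⟩
  · exact ⟨0, Nat.zero_le k, fun _ => x, rfl, rfl, fun _ h => absurd h (Nat.not_lt_zero _)⟩
  · refine ⟨1, hk, fun t => if t = 0 then x else y, rfl, rfl, fun t ht => ?_⟩
    obtain rfl : t = 0 := by omega
    simpa using hxy
  · refine ⟨i + 1, by omega, fun t => if t = 0 then x else
      if h : t ≤ i then zBlock z ⟨t - 1, by omega⟩ else y, rfl, by simp, fun t ht => ?_⟩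
    rcases Nat.eq_zero_or_pos t with rfl | htpos
    · simpa [show 1 ≤ i from hi] using hfirst
    by_cases hti : t + 1 ≤ i
    · have h := hmid (t - 1) (by omega)
      simp only [show t - 1 + 1 = t by omega] at h
      simpa [htpos.ne', hti, show t ≤ i by omega] using h
    · obtain rfl : t = i := by omega
      simpa [htpos.ne', hti] using hlast

lemma exists_phiRad_of_hasWalk {l : ℕ} (hlk : l ≤ k) {x y : Fin n → Bool}
    (h : HasWalk E l x y) : ∃ z, phiRad n k E x y z := by
  obtain ⟨f, rfl, rfl, hE⟩ := h
  match l, hlk, hE with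
  | 0, _, _ => exact ⟨fun _ => false, Or.inl rfl⟩
  | 1, _, hE => exact ⟨fun _ => false, Or.inr (Or.inl (hE 0 one_pos))⟩
  | i + 2, hlk, hE =>
    -- the inner vertices `f 1, …, f (i + 1)` become the blocks of `z`
    refine ⟨zOfBlocks (fun t => f (t + 1)), Or.inr (Or.inr ⟨i + 1, by omega, by omega, ?_, ?_, ?_⟩)⟩
    · simpa [zBlock_zOfBlocks] using hE 0 (by omega)
    · intro j hj
      simpa [zBlock_zOfBlocks] using hE (j + 1) (by omega)
    · simpa [zBlock_zOfBlocks] using hE (i + 1) (by omega)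

lemma radiusAtMost_iff_exists_forall_exists_phiRad (hk : 1 ≤ k) :
    RadiusAtMost E k ↔ ∃ x, ∀ y, ∃ z, phiRad n k E x y z := by
  refine exists_congr fun x => forall_congr' fun y => ?_
  rw [pathAtMost_iff_exists_hasWalk]
  constructor
  · rintro ⟨l, hlk, hw⟩
    exact exists_phiRad_of_hasWalk hlk hw
  · rintro ⟨z, hz⟩
    exact hasWalk_of_phiRad hk hz

end RadiusEncoding

section Ranks

variable {n m : ℕ}

def rankEquiv : StepPhi n m ≃ Fin (n + (n + m)) :=
  (Equiv.sumCongr (Equiv.refl _) finSumFinEquiv).trans finSumFinEquiv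

lemma rankEquiv_val (s : StepPhi n m) : (rankEquiv s : ℕ) = rankPhi s := by
  rcases s with i | i | l <;> simp [rankEquiv, rankPhi, Nat.add_assoc]

lemma rankPhi_injective : Function.Injective (rankPhi : StepPhi n m → ℕ) := fun s t h =>
  rankEquiv.injective (Fin.ext (by rw [rankEquiv_val, rankEquiv_val, h]))

lemma rankPhi_lt (s : StepPhi n m) : rankPhi s < n + n + m := by
  have := (rankEquiv s).isLt
  rw [rankEquiv_val] at this
  omega

def stepOfRank (p : ℕ) (hp : p < n + n + m) : StepPhi n m :=
  rankEquiv.symm ⟨p, by omega⟩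

@[simp]
lemma rankPhi_stepOfRank (p : ℕ) (hp : p < n + n + m) : rankPhi (stepOfRank p hp) = p := by
  rw [stepOfRank, ← rankEquiv_val, Equiv.apply_symm_apply]

lemma card_S_WPhi (φ : (Fin n → Bool) → (Fin n → Bool) → (Fin m → Bool) → Prop) :
    (WPhi n m φ).S.card = n + n + m := by
  simp [WPhi, Nat.add_assoc]

end Ranks

lemma WAP.oneShotWins_zero_iff {σ υ : Type} [DecidableEq σ] [DecidableEq υ] {W : WAP σ υ}
    {t : ℕ} {Δ : Finset υ} {θ : σ → Option υ} {b : Bool} :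
    W.OneShotWins t 0 Δ θ b ↔ W.IsValidPlan θ :=
  ⟨fun ⟨htot, hpp, hv⟩ => ⟨⟨hpp, htot⟩, hv⟩, fun ⟨⟨hpp, htot⟩, hv⟩ => ⟨htot, hpp, hv⟩⟩

section Truncation

variable {n m : ℕ} {φ : (Fin n → Bool) → (Fin n → Bool) → (Fin m → Bool) → Prop}
  {θ : StepPhi n m → Option UserPhi}

def truncate (θ : StepPhi n m → Option UserPhi) (p : ℕ) : StepPhi n m → Option UserPhi :=
  fun s => if rankPhi s < p then θ s else none

def AvoidsFrom (θ : StepPhi n m → Option UserPhi) (Δ : Finset UserPhi) (p : ℕ) : Prop :=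
  ∀ s u, θ s = some u → p ≤ rankPhi s → u ∉ Δ

def AssignedBelow (θ : StepPhi n m → Option UserPhi) (p : ℕ) : Prop :=
  ∀ s, θ s ≠ none ↔ rankPhi s < p

@[simp]
lemma truncate_zero : truncate θ 0 = fun _ => none := rfl

lemma truncate_of_le {p : ℕ} (hp : n + n + m ≤ p) : truncate θ p = θ :=
  funext fun s => if_pos ((rankPhi_lt s).trans_le hp)

lemma truncate_truncate_of_le {p p' : ℕ} (h : p ≤ p') :
    truncate (truncate θ p') p = truncate θ p := by
  funext s
  simp only [truncate]
  split_ifs <;> first | rfl | omega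

lemma truncate_succ {p : ℕ} (hp : p < n + n + m) :
    truncate θ (p + 1) =
      Function.update (truncate θ p) (stepOfRank p hp) (θ (stepOfRank p hp)) := by
  funext s
  rcases eq_or_ne s (stepOfRank p hp) with rfl | hne
  · simp [truncate]
  · have : rankPhi s ≠ p := fun h => hne (rankPhi_injective (by simp [h]))
    simp only [truncate, Function.update_of_ne hne]
    split_ifs <;> first | rfl | omega

lemma AvoidsFrom.of_succ {Δ : Finset UserPhi} {p : ℕ} (hΔ : AvoidsFrom θ Δ (p + 1))
    (hp : p < n + n + m) {u : UserPhi} (hu : θ (stepOfRank p hp) = some u) (huΔ : u ∉ Δ) :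
    AvoidsFrom θ Δ p := by
  intro s v hs hps
  rcases hps.eq_or_lt with h | h
  · obtain rfl : s = stepOfRank p hp := rankPhi_injective (by simp [h])
    exact Option.some.inj (hs.symm.trans hu) ▸ huΔ
  · exact hΔ s v hs h

lemma WAP.IsValidPlan.ne_none (hθ : (WPhi n m φ).IsValidPlan θ) (s : StepPhi n m) : θ s ≠ none :=
  hθ.1.2 s (Finset.mem_univ s)

lemma WAP.IsValidPlan.isPartialPlan_truncate (hθ : (WPhi n m φ).IsValidPlan θ) (p : ℕ) :
    (WPhi n m φ).IsPartialPlan (truncate θ p) := by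
  refine ⟨fun s u hs => hθ.1.1.1 s u ?_, fun s₁ s₂ _ _ h₁ h₂ _ => ?_⟩
  · simp only [truncate] at hs
    split_ifs at hs
    exact hs
  · have hs₁ : rankPhi s₁ < p := by by_contra h; simp [truncate, h] at h₁
    have hs₂ : rankPhi s₂ < p := lt_of_le_of_lt h₂ hs₁
    simpa [truncate, hs₂] using hθ.ne_none s₂

lemma WAP.IsValidPlan.valid_truncate (hθ : (WPhi n m φ).IsValidPlan θ) (p : ℕ) :
    (WPhi n m φ).Valid (truncate θ p) := by
  refine ⟨fun s u hs => hθ.2.1 s u ?_, fun c hc hdom => ?_⟩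
  · simp only [truncate] at hs
    split_ifs at hs
    exact hs
  · have hsub : ∀ s ∈ c.1, rankPhi s < p := fun s hs => by
      by_contra h
      exact hdom s hs (by simp [truncate, h])
    have : restrictTo (truncate θ p) c.1 = restrictTo θ c.1 := by
      funext s
      by_cases hs : s ∈ c.1 <;> simp [restrictTo, truncate, hs, hsub]
    rw [this]
    exact hθ.2.2 c hc fun s _ => hθ.ne_none s

lemma WAP.IsValidPlan.p1Move_truncate (hθ : (WPhi n m φ).IsValidPlan θ) {Δ : Finset UserPhi}
    {p : ℕ} (hp : p < n + n + m) {u : UserPhi} (hu : θ (stepOfRank p hp) = some u)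
    (huΔ : u ∉ Δ) :
    (WPhi n m φ).P1Move Δ (truncate θ p) (truncate θ (p + 1)) :=
  ⟨stepOfRank p hp, u, Finset.mem_univ _, by simp [truncate], (hθ.1.1.1 _ _ hu).2, huΔ,
    by rw [truncate_succ hp, hu], hθ.isPartialPlan_truncate _, hθ.valid_truncate _⟩

end Truncation

section Users

variable {n : ℕ} {Δ : Finset UserPhi}

def ustarUser (j : ℕ) : UserPhi := Sum.inr (decide (j % 2 = 0), j)

lemma ustarUser_injective : Function.Injective ustarUser := fun _ _ h =>
  (by simpa [ustarUser] using h : _ ∧ _).2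

lemma inl_mem_UboolFin {b : Bool} {i : ℕ} :
    (Sum.inl (b, i) : UserPhi) ∈ UboolFin n ↔ i ∈ Finset.Icc 1 (n + 1) := by
  cases b <;> simp [UboolFin]

lemma exists_inl_notMem_of_card_le (hΔ : Δ.card ≤ n) (b : Bool) :
    ∃ i ∈ Finset.Icc 1 (n + 1), (Sum.inl (b, i) : UserPhi) ∉ Δ := by
  have hcard :
      Δ.card < ((Finset.Icc 1 (n + 1)).image fun i => (Sum.inl (b, i) : UserPhi)).card := by
    rw [Finset.card_image_of_injective _ fun i j h => by simpa using h]
    simpa using Nat.lt_succ_of_le hΔ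
  obtain ⟨u, hu, huΔ⟩ := Finset.exists_mem_notMem_of_card_lt_card hcard
  obtain ⟨i, hi, rfl⟩ := Finset.mem_image.mp hu
  exact ⟨i, hi, huΔ⟩

lemma exists_strictMono_of_card_le {p : ℕ} {A : Finset ℕ} (hA : ∀ a ∈ A, p < a)
    (hcard : n - p ≤ A.card) :
    ∃ J : Fin n → ℕ, StrictMono J ∧ (∀ i : Fin n, (i : ℕ) < p → J i = i + 1) ∧
      ∀ i : Fin n, p ≤ (i : ℕ) → J i ∈ A := by
  obtain ⟨B, hBA, hB⟩ := Finset.exists_subset_card_eq hcard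
  let e := B.orderEmbOfFin hB
  have he : ∀ i, e i ∈ A := fun i => hBA (B.orderEmbOfFin_mem hB i)
  refine ⟨fun i => if h : (i : ℕ) < p then i + 1 else e ⟨i - p, by omega⟩, ?_,
    fun i hi => dif_pos hi, fun i hi => by simpa [not_lt.mpr hi] using he _⟩
  intro i i' hii'
  have hii' : (i : ℕ) < i' := hii'
  dsimp only
  split_ifs with h h' h'
  · omega
  · exact lt_of_le_of_lt (by omega) (hA _ (he _))
  · omega
  · exact e.strictMono (Fin.mk_lt_mk.mpr (by omega))

lemma exists_strictMono_ustarIndex (hΔ : Δ.card ≤ n) (p : ℕ) :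
    ∃ J : Fin n → ℕ, StrictMono J ∧ (∀ i, J i ∈ Finset.Icc 1 (2 * n)) ∧
      (∀ i : Fin n, (i : ℕ) < p → J i = i + 1) ∧
      ∀ i : Fin n, p ≤ (i : ℕ) → ustarUser (J i) ∉ Δ := by
  classical
  set A := (Finset.Icc (p + 1) (2 * n)).filter fun j => ustarUser j ∉ Δ
  have hbad : ((Finset.Icc (p + 1) (2 * n)).filter fun j => ustarUser j ∈ Δ).card ≤ n :=
    (Finset.card_le_card_of_injOn ustarUser (fun j hj => (Finset.mem_filter.mp hj).2)
      ustarUser_injective.injOn).trans hΔ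
  have hsplit : ((Finset.Icc (p + 1) (2 * n)).filter fun j => ustarUser j ∈ Δ).card + A.card =
      2 * n - p := by
    rw [Finset.card_filter_add_card_filter_not, Nat.card_Icc]; omega
  obtain ⟨J, hJ, hlow, hhigh⟩ := exists_strictMono_of_card_le (n := n) (p := p) (A := A)
    (fun a ha => by simp only [A, Finset.mem_filter, Finset.mem_Icc] at ha; omega) (by omega)
  refine ⟨J, hJ, fun i => ?_, hlow, fun i hi => (Finset.mem_filter.mp (hhigh i hi)).2⟩
  have := i.isLt
  by_cases hi : (i : ℕ) < p
  · simp only [hlow i hi, Finset.mem_Icc]; omega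
  · have := Finset.mem_Icc.mp (Finset.mem_filter.mp (hhigh i (not_lt.mp hi))).1
    simp only [Finset.mem_Icc]; omega

end Users

section Plans

variable {n m : ℕ} {φ : (Fin n → Bool) → (Fin n → Bool) → (Fin m → Bool) → Prop}

lemma restrictTo_univ {σ υ : Type} [Fintype σ] [DecidableEq σ] (θ : σ → Option υ) :
    restrictTo θ Finset.univ = θ :=
  funext fun _ => if_pos (Finset.mem_univ _)

lemma mem_U_WPhi_of_mem_A {s : StepPhi n m} {u : UserPhi} (h : (s, u) ∈ (WPhi n m φ).A) :
    u ∈ (WPhi n m φ).U := by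
  rcases s with i | i | l
  exacts [Finset.mem_union_left _ h, Finset.mem_union_right _ h, Finset.mem_union_left _ h]

lemma WAP.IsValidPlan.phi {θ : StepPhi n m → Option UserPhi}
    (hθ : (WPhi n m φ).IsValidPlan θ) : φ (xVal θ) (yVal θ) (zVal θ) := by
  have h := hθ.2.2 _ (Or.inr rfl) fun s _ => hθ.ne_none s
  rw [restrictTo_univ] at h
  exact h.2.2

lemma WAP.IsValidPlan.exists_ustarIndex {θ : StepPhi n m → Option UserPhi}
    (hθ : (WPhi n m φ).IsValidPlan θ) :
    ∃ J : Fin n → ℕ, StrictMono J ∧ ∀ i, J i ∈ Finset.Icc 1 (2 * n) ∧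
      θ (Sum.inr (Sum.inl i)) = some (ustarUser (J i)) := by
  have hJ : ∀ i : Fin n, ∃ j ∈ Finset.Icc 1 (2 * n),
      θ (Sum.inr (Sum.inl i)) = some (ustarUser j) := fun i => by
    obtain ⟨u, hu⟩ := Option.ne_none_iff_exists'.mp (hθ.ne_none (Sum.inr (Sum.inl i)))
    have hu' : u ∈ UstarFin n := hθ.2.1 _ u hu
    obtain ⟨j, hj, rfl⟩ := Finset.mem_image.mp hu'
    exact ⟨j, hj, hu⟩
  choose J hJr hθJ using hJ
  have hstep : ∀ (i : ℕ) (h : i + 1 < n), J ⟨i, by omega⟩ < J ⟨i + 1, h⟩ := fun i h => by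
    obtain ⟨-, -, b₁, j₁, b₂, j₂, h₁, h₂, hlt⟩ :=
      hθ.2.2 _ (Or.inl ⟨⟨i, by omega⟩, h, rfl⟩) fun s _ => hθ.ne_none s
    simp only [restrictTo, Finset.mem_insert, Finset.mem_singleton, true_or, or_true,
      if_true, hθJ, ustarUser, Option.some.injEq, Sum.inr.injEq, Prod.mk.injEq] at h₁ h₂
    omega
  refine ⟨J, ?_, fun i => ⟨hJr i, hθJ i⟩⟩
  rcases n with _ | n
  · exact fun i => i.elim0
  · exact Fin.strictMono_iff_lt_succ.mpr fun i => hstep i (by omega)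

def planOf (x : Fin n → Bool) (xi : Fin n → ℕ) (J : Fin n → ℕ) (z : Fin m → Bool)
    (zi : Fin m → ℕ) : StepPhi n m → Option UserPhi
  | Sum.inl i => some (Sum.inl (x i, xi i))
  | Sum.inr (Sum.inl i) => some (ustarUser (J i))
  | Sum.inr (Sum.inr l) => some (Sum.inl (z l, zi l))

def parities (J : Fin n → ℕ) : Fin n → Bool := fun i => decide (J i % 2 = 0)

variable {x : Fin n → Bool} {xi J : Fin n → ℕ} {z : Fin m → Bool} {zi : Fin m → ℕ}

lemma planOf_isValidPlan (hxi : ∀ i, xi i ∈ Finset.Icc 1 (n + 1))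
    (hzi : ∀ l, zi l ∈ Finset.Icc 1 (n + 1)) (hJ : StrictMono J)
    (hJr : ∀ i, J i ∈ Finset.Icc 1 (2 * n)) (hφ : φ x (parities J) z) :
    (WPhi n m φ).IsValidPlan (planOf x xi J z zi) := by
  have hA : ∀ s u, planOf x xi J z zi s = some u → (s, u) ∈ (WPhi n m φ).A := by
    rintro (i | i | l) u ⟨⟩
    exacts [inl_mem_UboolFin.mpr (hxi i), Finset.mem_image_of_mem ustarUser (hJr i),
      inl_mem_UboolFin.mpr (hzi l)]
  have htot : ∀ s, planOf x xi J z zi s ≠ none := by rintro (i | i | l) <;> simp [planOf]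
  have hU : ∀ s u, planOf x xi J z zi s = some u → u ∈ (WPhi n m φ).U :=
    fun s u h => mem_U_WPhi_of_mem_A (hA s u h)
  refine ⟨⟨⟨fun s u h => ⟨Finset.mem_univ s, hU s u h⟩, fun _ s _ _ _ _ _ => htot s⟩,
    fun s _ => htot s⟩, hA, ?_⟩
  rintro c (⟨i, hi, rfl⟩ | hc) -
  · refine ⟨fun s => ?_, fun s u h => ?_, parities J i, J i, parities J ⟨i + 1, hi⟩,
      J ⟨i + 1, hi⟩, ?_, ?_, hJ (Fin.mk_lt_mk.mpr (Nat.lt_succ_self i))⟩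
    · by_cases hs : s ∈ ({Sum.inr (Sum.inl i), Sum.inr (Sum.inl ⟨i + 1, hi⟩)} :
        Finset (StepPhi n m)) <;> simp [restrictTo, hs, htot]
    · simp only [restrictTo] at h
      split_ifs at h
      exact hU s u h
    · simp [restrictTo, planOf, ustarUser, parities]
    · simp [restrictTo, planOf, ustarUser, parities]
  · rw [Set.mem_singleton_iff.mp hc, restrictTo_univ]
    exact ⟨htot, hU, hφ⟩

end Plans

section Repair

variable {n m : ℕ} {φ : (Fin n → Bool) → (Fin n → Bool) → (Fin m → Bool) → Prop}

/-- Player 1's plan as long as Player 2 has not struck: `x₀` on the `x`-steps, the users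
`(f,1), (t,2), …` of `U_star` on the `y`-steps, and the witness `zfun y` for the truth values
`y` they encode on the `z`-steps. -/
def canonicalPlan (x₀ : Fin n → Bool) (zfun : (Fin n → Bool) → Fin m → Bool) :
    StepPhi n m → Option UserPhi :=
  planOf x₀ (fun _ => 1) (fun i => i + 1) (zfun (parities fun i => i + 1)) (fun _ => 1)

/-- However Player 2 strikes before step `p`, the canonical plan can be completed from there
on: the `n + 1` users of each truth value in `U_bool` cannot all be removed, and of the
`2n - p'` indices of `U_star` above the `p' = p - n` already used, at least `n - p'`
survive. -/
lemma exists_repair_canonicalPlan {x₀ : Fin n → Bool} {zfun : (Fin n → Bool) → Fin m → Bool}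
    (hzf : ∀ y, φ x₀ y (zfun y)) (p : ℕ) {Δ : Finset UserPhi} (hΔ : Δ.card ≤ n) :
    ∃ θ, (WPhi n m φ).IsValidPlan θ ∧ truncate θ p = truncate (canonicalPlan x₀ zfun) p ∧
      AvoidsFrom θ Δ p := by
  choose pick hpick hpickΔ using exists_inl_notMem_of_card_le hΔ
  obtain ⟨J, hJ, hJr, hJlow, hJΔ⟩ := exists_strictMono_ustarIndex hΔ (p - n)
  refine ⟨planOf x₀ (fun i => if (i : ℕ) < p then 1 else pick (x₀ i)) J (zfun (parities J))
    (fun l => if n + n + l < p then 1 else pick (zfun (parities J) l)),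
    planOf_isValidPlan (fun i => ?_) (fun l => ?_) hJ hJr (hzf _), ?_, ?_⟩
  · split_ifs
    exacts [by simp, hpick _]
  · split_ifs
    exacts [by simp, hpick _]
  · funext s
    rcases s with i | i | l <;> simp only [truncate, rankPhi]
    · by_cases h : (i : ℕ) < p <;> simp [planOf, canonicalPlan, h]
    · by_cases h : n + (i : ℕ) < p
      · simp [planOf, canonicalPlan, h, hJlow i (by omega)]
      · simp [h]
    · by_cases h : n + n + (l : ℕ) < p
      · -- a `z`-step below `p` means that all `y`-steps were assigned canonically
        have hJ' : J = fun i : Fin n => (i : ℕ) + 1 := funext fun i => hJlow i (by omega)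
        simp [planOf, canonicalPlan, h, hJ']
      · simp [h]
  · rintro (i | i | l) u hu hp <;> simp only [planOf, Option.some.injEq] at hu <;> subst hu <;>
      simp only [rankPhi] at hp
    · simpa [show ¬ (i : ℕ) < p by omega] using hpickΔ (x₀ i)
    · exact hJΔ i (by omega)
    · simpa [show ¬ n + n + (l : ℕ) < p by omega] using hpickΔ _

end Repair

section ForwardGame

variable {n m : ℕ} {φ : (Fin n → Bool) → (Fin n → Bool) → (Fin m → Bool) → Prop}
  {θ : StepPhi n m → Option UserPhi}

lemma oneShotWins_truncate_of_avoidsFrom (t : ℕ) (hθ : (WPhi n m φ).IsValidPlan θ)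
    {Δ : Finset UserPhi} {p q : ℕ} (hΔ : AvoidsFrom θ Δ p) (hpq : p + q = n + n + m) :
    (WPhi n m φ).OneShotWins t q Δ (truncate θ p) true := by
  induction q generalizing p with
  | zero => rwa [oneShotWins_zero_iff, truncate_of_le (by omega)]
  | succ q ih =>
    have hp : p < n + n + m := by omega
    refine Or.inr ⟨⟨stepOfRank p hp, Finset.mem_univ _, by simp [truncate]⟩, ?_⟩
    rintro Δ' b' (⟨rfl, rfl⟩ | ⟨h, -⟩)
    · obtain ⟨u, hu⟩ := Option.ne_none_iff_exists'.mp (hθ.ne_none (stepOfRank p hp))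
      exact ⟨_, hθ.p1Move_truncate hp hu (hΔ _ _ hu (by simp)),
        ih (fun s u hs hps => hΔ s u hs (by omega)) (by omega)⟩
    · cases h

/-- Player 1 follows `θ₀` until the strike and then switches to a repaired plan. -/
lemma oneShotWins_truncate_of_forall_repair {t : ℕ} (θ₀ : StepPhi n m → Option UserPhi)
    (hrepair : ∀ (p : ℕ) (Δ : Finset UserPhi), Δ.card ≤ t → ∃ θ,
      (WPhi n m φ).IsValidPlan θ ∧ truncate θ p = truncate θ₀ p ∧ AvoidsFrom θ Δ p)
    {p q : ℕ} (hpq : p + q = n + n + m) :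
    (WPhi n m φ).OneShotWins t q ∅ (truncate θ₀ p) false := by
  have hθ₀ : (WPhi n m φ).IsValidPlan θ₀ := by
    obtain ⟨θ, hθ, hθθ₀, -⟩ := hrepair (n + n + m) ∅ (by simp)
    rw [truncate_of_le le_rfl, truncate_of_le le_rfl] at hθθ₀
    exact hθθ₀ ▸ hθ
  induction q generalizing p with
  | zero => rwa [oneShotWins_zero_iff, truncate_of_le (by omega)]
  | succ q ih =>
    have hp : p < n + n + m := by omega
    refine Or.inr ⟨⟨stepOfRank p hp, Finset.mem_univ _, by simp [truncate]⟩, ?_⟩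
    rintro Δ' b' (⟨rfl, rfl⟩ | ⟨-, rfl, -, -, hcard⟩)
    · obtain ⟨u, hu⟩ := Option.ne_none_iff_exists'.mp (hθ₀.ne_none (stepOfRank p hp))
      exact ⟨_, hθ₀.p1Move_truncate hp hu (Finset.notMem_empty u), ih (by omega)⟩
    · obtain ⟨θ, hθ, hθθ₀, hΔ⟩ := hrepair p Δ' (by simpa using hcard)
      obtain ⟨u, hu⟩ := Option.ne_none_iff_exists'.mp (hθ.ne_none (stepOfRank p hp))
      refine ⟨truncate θ (p + 1), hθθ₀ ▸ hθ.p1Move_truncate hp hu (hΔ _ _ hu (by simp)), ?_⟩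
      exact oneShotWins_truncate_of_avoidsFrom t hθ (fun s u hs hps => hΔ s u hs (by omega))
        (by omega)

end ForwardGame

section ConverseGame

variable {n m : ℕ} {φ : (Fin n → Bool) → (Fin n → Bool) → (Fin m → Bool) → Prop}
  {θ : StepPhi n m → Option UserPhi} {p : ℕ}

lemma assignedBelow_zero : AssignedBelow (fun _ : StepPhi n m => (none : Option UserPhi)) 0 :=
  fun s => by simp

lemma AssignedBelow.update (hθ : AssignedBelow θ p) (hp : p < n + n + m) (u : UserPhi) :
    AssignedBelow (Function.update θ (stepOfRank p hp) (some u)) (p + 1) := by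
  intro s
  rcases eq_or_ne s (stepOfRank p hp) with rfl | hne
  · simp
  · have : rankPhi s ≠ p := fun h => hne (rankPhi_injective (by simp [h]))
    rw [Function.update_of_ne hne, hθ s]
    omega

lemma AssignedBelow.truncate_eq (hθ : AssignedBelow θ p) : truncate θ p = θ := by
  funext s
  by_cases hs : rankPhi s < p
  · simp [truncate, hs]
  · simpa [truncate, hs] using (not_not.mp ((hθ s).not.mpr hs)).symm

lemma truncate_update_stepOfRank (hp : p < n + n + m) (v : Option UserPhi) :
    truncate (Function.update θ (stepOfRank p hp) v) p = truncate θ p := by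
  funext s
  rcases eq_or_ne s (stepOfRank p hp) with rfl | hne
  · simp [truncate]
  · simp [truncate, hne]

/-- The steps are linearly ordered, so a move of Player 1 must assign the next step. -/
lemma AssignedBelow.eq_update_of_p1Move (hθ : AssignedBelow θ p) {Δ : Finset UserPhi}
    {θ' : StepPhi n m → Option UserPhi} (hmove : (WPhi n m φ).P1Move Δ θ θ') :
    ∃ hp : p < n + n + m, ∃ u ∉ Δ, θ' = Function.update θ (stepOfRank p hp) (some u) := by
  obtain ⟨s, u, -, hs, -, huΔ, rfl, hpp, -⟩ := hmove
  have hps : p ≤ rankPhi s := not_lt.mp fun h => (hθ s).mpr h hs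
  have hp : p < n + n + m := hps.trans_lt (rankPhi_lt s)
  obtain rfl : s = stepOfRank p hp := by
    by_contra hne
    -- otherwise the step of rank `p` would precede `s` without being assigned
    have hne' : stepOfRank p hp ≠ s := Ne.symm hne
    refine hpp.2 s (stepOfRank p hp) (Finset.mem_univ _) (Finset.mem_univ _) (by simp)
      (show rankPhi _ ≤ rankPhi s by simpa using hps) hne' ?_
    rw [Function.update_of_ne hne']
    exact not_not.mp ((hθ _).not.mpr (by simp))
  exact ⟨hp, u, huΔ, rfl⟩

lemma WAP.OneShotWins.exists_response {t q : ℕ} {Δ Δ' : Finset UserPhi} {b b' : Bool}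
    (hw : (WPhi n m φ).OneShotWins t (q + 1) Δ θ b) (hθ : AssignedBelow θ p)
    (hp : p < n + n + m) (hmove : (WPhi n m φ).OneShotP2Move t Δ b Δ' b') :
    ∃ u ∉ Δ', (WPhi n m φ).OneShotWins t q Δ'
      (Function.update θ (stepOfRank p hp) (some u)) b' := by
  rcases hw with ⟨htot, -⟩ | ⟨-, hw⟩
  · exact absurd ((hθ _).mp (htot _ (Finset.mem_univ (stepOfRank p hp)))) (by simp)
  obtain ⟨θ', hmove', hw'⟩ := hw Δ' b' hmove
  obtain ⟨_, u, hu, hθ'⟩ := hθ.eq_update_of_p1Move hmove'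
  exact ⟨u, hu, hθ' ▸ hw'⟩

/-- Player 2 passes for `j` rounds. -/
lemma WAP.OneShotWins.exists_extension {t q : ℕ} {Δ : Finset UserPhi} {b : Bool}
    (hw : (WPhi n m φ).OneShotWins t q Δ θ b) (hθ : AssignedBelow θ p)
    (hpq : p + q = n + n + m) {j : ℕ} (hj : j ≤ q) :
    ∃ θ', AssignedBelow θ' (p + j) ∧ truncate θ' p = θ ∧ AvoidsFrom θ' Δ p ∧
      (WPhi n m φ).OneShotWins t (q - j) Δ θ' b := by
  induction j generalizing p q θ with
  | zero => exact ⟨θ, hθ, hθ.truncate_eq,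
      fun s u hs hps => absurd ((hθ s).mp (by simp [hs])) (by omega), hw⟩
  | succ j ih =>
    obtain ⟨q, rfl⟩ : ∃ q', q = q' + 1 := ⟨q - 1, by omega⟩
    have hp : p < n + n + m := by omega
    obtain ⟨u, hu, hw₁⟩ := hw.exists_response hθ hp (Or.inl ⟨rfl, rfl⟩)
    obtain ⟨θ', hθ', htr, hav, hw'⟩ := ih hw₁ (hθ.update hp u) (by omega) (by omega)
    have hθ'p : θ' (stepOfRank p hp) = some u := by
      simpa [truncate] using congrFun htr (stepOfRank p hp)
    refine ⟨θ', by rwa [← Nat.add_assoc, Nat.add_right_comm], ?_, hav.of_succ hp hθ'p hu,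
      by simpa using hw'⟩
    rw [← truncate_truncate_of_le (Nat.le_succ p), htr, truncate_update_stepOfRank,
      hθ.truncate_eq]

lemma WAP.OneShotWins.exists_validPlan {t q : ℕ} {Δ : Finset UserPhi} {b : Bool}
    (hw : (WPhi n m φ).OneShotWins t q Δ θ b) (hθ : AssignedBelow θ p)
    (hpq : p + q = n + n + m) :
    ∃ θ', (WPhi n m φ).IsValidPlan θ' ∧ truncate θ' p = θ ∧ AvoidsFrom θ' Δ p := by
  obtain ⟨θ', -, htr, hav, hw'⟩ := hw.exists_extension hθ hpq le_rfl
  exact ⟨θ', oneShotWins_zero_iff.mp (by simpa using hw'), htr, hav⟩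

end ConverseGame

section Decoding

variable {n m : ℕ} {φ : (Fin n → Bool) → (Fin n → Bool) → (Fin m → Bool) → Prop}
  {y : Fin n → Bool}

/-- Of the users with indices `2i+1` (an `f`-user) and `2i+2` (a `t`-user) of `U_star`,
Player 2 removes the one whose truth value is not `y i`. -/
def struckIndex (y : Fin n → Bool) (i : Fin n) : ℕ := if y i then 2 * i + 1 else 2 * i + 2

def keptIndex (y : Fin n → Bool) (i : Fin n) : ℕ := if y i then 2 * i + 2 else 2 * i + 1

def struckUsers (y : Fin n → Bool) : Finset UserPhi :=
  Finset.univ.image fun i => ustarUser (struckIndex y i)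

lemma card_struckUsers_le : (struckUsers y).card ≤ n :=
  Finset.card_image_le.trans (by simp)

lemma struckUsers_subset : struckUsers y ⊆ (WPhi n m φ).U := by
  intro u hu
  obtain ⟨i, -, rfl⟩ := Finset.mem_image.mp hu
  refine Finset.mem_union_right _ (Finset.mem_image_of_mem _ ?_)
  have := i.isLt
  simp only [struckIndex, Finset.mem_Icc]
  split_ifs <;> omega

lemma keptIndex_strictMono : StrictMono (keptIndex y) := fun i i' h => by
  have h : (i : ℕ) < i' := h
  simp only [keptIndex]
  split_ifs <;> omega

/-- The `n` surviving indices leave room for only one increasing choice of `n` indices. -/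
lemma eq_keptIndex_of_strictMono {J : Fin n → ℕ} (hJ : StrictMono J)
    (hJr : ∀ i, J i ∈ Finset.Icc 1 (2 * n)) (hJy : ∀ i i', J i ≠ struckIndex y i') :
    J = keptIndex y := by
  have hR : (Finset.univ.image (keptIndex y)).card = n := by
    rw [Finset.card_image_of_injective _ keptIndex_strictMono.injective]
    simp
  have hJR : ∀ i, J i ∈ Finset.univ.image (keptIndex y) := fun i => by
    have hi := Finset.mem_Icc.mp (hJr i)
    -- `J i` is one of the indices `2c+1`, `2c+2` of pair `c`, and not the struck one
    have hc : (J i - 1) / 2 < n := by omega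
    have := hJy i ⟨_, hc⟩
    refine Finset.mem_image.mpr ⟨⟨_, hc⟩, Finset.mem_univ _, ?_⟩
    simp only [struckIndex, keptIndex] at this ⊢
    split_ifs at this ⊢ <;> omega
  exact (Finset.orderEmbOfFin_unique hR hJR hJ).trans (Finset.orderEmbOfFin_unique hR
    (fun i => Finset.mem_image_of_mem _ (Finset.mem_univ i)) keptIndex_strictMono).symm

lemma yVal_eq_of_avoidsFrom {θ : StepPhi n m → Option UserPhi}
    (hθ : (WPhi n m φ).IsValidPlan θ) (hΔ : AvoidsFrom θ (struckUsers y) n) : yVal θ = y := by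
  obtain ⟨J, hJ, hJθ⟩ := hθ.exists_ustarIndex
  have hJy : J = keptIndex y := eq_keptIndex_of_strictMono hJ (fun i => (hJθ i).1)
    fun i i' h => hΔ _ _ (hJθ i).2 (Nat.le_add_right n i)
      (Finset.mem_image.mpr ⟨i', Finset.mem_univ _, by rw [h]⟩)
  funext i
  simp only [yVal, (hJθ i).2, ustarUser, hJy, keptIndex]
  split_ifs with h <;> simp [h]

end Decoding

section Resiliency

variable {n m : ℕ} {φ : (Fin n → Bool) → (Fin n → Bool) → (Fin m → Bool) → Prop}

lemma oneShotResilient_WPhi_of_exists (h : ∃ x, ∀ y, ∃ z, φ x y z) :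
    (WPhi n m φ).OneShotResilient n := by
  obtain ⟨x₀, hx₀⟩ := h
  choose zfun hzf using hx₀
  have hw := oneShotWins_truncate_of_forall_repair (canonicalPlan x₀ zfun)
    (fun p Δ hΔ => exists_repair_canonicalPlan hzf p hΔ) (p := 0) (zero_add _)
  rwa [truncate_zero, ← card_S_WPhi φ] at hw

lemma xVal_truncate {θ : StepPhi n m → Option UserPhi} {p : ℕ} (hp : n ≤ p) :
    xVal (truncate θ p) = xVal θ :=
  funext fun i => by simp [xVal, truncate, rankPhi, show (i : ℕ) < p by omega]

lemma exists_of_oneShotResilient_WPhi (hn : 1 ≤ n) (h : (WPhi n m φ).OneShotResilient n) :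
    ∃ x, ∀ y, ∃ z, φ x y z := by
  rw [OneShotResilient, card_S_WPhi] at h
  obtain ⟨θx, hθx, -, -, hwx⟩ := h.exists_extension assignedBelow_zero (zero_add _) (j := n)
    (by omega)
  rw [zero_add] at hθx
  refine ⟨xVal θx, fun y => ?_⟩
  -- once the `x`-steps are assigned, Player 2 strikes the users that contradict `y`
  have hstrike : (WPhi n m φ).OneShotP2Move n ∅ false (struckUsers y) true :=
    Or.inr ⟨rfl, rfl, Finset.empty_subset _, struckUsers_subset, by simpa using card_struckUsers_le⟩
  have hp : n < n + n + m := by omega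
  rw [show n + n + m - n = n + m - 1 + 1 by omega] at hwx
  obtain ⟨u, hu, hw⟩ := hwx.exists_response hθx hp hstrike
  obtain ⟨θ, hθ, htr, hav⟩ := hw.exists_validPlan (hθx.update hp u) (by omega)
  have hθn : θ (stepOfRank n hp) = some u := by
    simpa [truncate] using congrFun htr (stepOfRank n hp)
  have hx : xVal θ = xVal θx := by
    rw [← xVal_truncate (le_refl n), ← truncate_truncate_of_le (Nat.le_succ n), htr,
      truncate_update_stepOfRank, hθx.truncate_eq]
  have hy : yVal θ = y := yVal_eq_of_avoidsFrom hθ (hav.of_succ hp hθn hu)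
  exact ⟨zVal θ, hx ▸ hy ▸ hθ.phi⟩

end Resiliency

/-- For a directed graph `G` on vertex set `Bool^n` with
edge relation `E`, the radius of `G` is at most `k` iff the workflow
authorization policy `W_φ` (with `φ = phiRad n k E`) is one-shot resilient
for budget `n`. -/
theorem radiusAtMost_iff_WPhi_oneShot_resilient
    (n k : ℕ) (hn : 1 ≤ n) (hk : 2 ≤ k)
    (E : (Fin n → Bool) → (Fin n → Bool) → Prop) :
    RadiusAtMost E k ↔
      (WPhi n (n * (k - 1)) (phiRad n k E)).OneShotResilient n :=
  (radiusAtMost_iff_exists_forall_exists_phiRad (by omega)).trans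
    ⟨oneShotResilient_WPhi_of_exists, exists_of_oneShotResilient_WPhi hn⟩
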